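/- The projected Aubry set coincides with the zero set of the Peierls barrier on the diagonal: A = {x ∈ X : h(x,x) = 0}. -/

import Mathlib

open Metric Set Filter Topology

/-- `X` is a `B`-length space at scale `K`. -/
def IsBLengthSpaceAtScale (X : Type*) [MetricSpace X] (B K : ℝ) : Prop :=
  ∀ x y : X, ∃ (n : ℕ) (p : ℕ → X), p 0 = x ∧ p n = y ∧
    (∀ i < n, dist (p i) (p (i + 1)) ≤ K) ∧
    ∑ i ∈ Finset.range n, dist (p i) (p (i + 1)) ≤ B * dist x y

/-- Uniform superlinearity of the cost `c`. -/
def UniformlySuperlinear {X : Type*} [MetricSpace X] (c : X → X → ℝ) : Prop :=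
  ∀ k : ℝ, 0 ≤ k → ∃ C : ℝ, ∀ x y : X, k * dist x y - C ≤ c x y

/-- Uniform boundedness of the cost `c`. -/
def UniformlyBounded {X : Type*} [MetricSpace X] (c : X → X → ℝ) : Prop :=
  ∀ R : ℝ, ∃ A : ℝ, ∀ x y : X, dist x y ≤ R → c x y ≤ A

/-- `u` is `α`-dominated: `u y - u x ≤ c x y + α` for all `x y`. -/
def Dominated {X : Type*} (c : X → X → ℝ) (α : ℝ) (u : X → ℝ) : Prop :=
  ∀ x y : X, u y - u x ≤ c x y + α

/-- Negative Lax-Oleinik semigroup. -/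
noncomputable def Tm {X : Type*} (c : X → X → ℝ) (u : X → ℝ) (x : X) : ℝ :=
  ⨅ y, (u y + c y x)

/-- Positive Lax-Oleinik semigroup. -/
noncomputable def Tp {X : Type*} (c : X → X → ℝ) (u : X → ℝ) (x : X) : ℝ :=
  ⨆ y, (u y - c x y)

/-- The critical constant `α[0]`: the smallest `α` for which `α`-dominated functions exist. -/
noncomputable def critValue {X : Type*} (c : X → X → ℝ) : ℝ :=
  sInf {α : ℝ | ∃ u : X → ℝ, Dominated c α u}

/-- The Mañé potential `φ(x,y) = sup_u (u y - u x)`, sup over critical sub-solutions. -/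
noncomputable def mane {X : Type*} (c : X → X → ℝ) (x y : X) : ℝ :=
  sSup {r : ℝ | ∃ u : X → ℝ, Dominated c (critValue c) u ∧ r = u y - u x}

/-- A bi-infinite sequence is `(u,c,α)`-calibrated if all its finite subchains of
consecutive terms are calibrated. -/
def IsCalibrated {X : Type*} (c : X → X → ℝ) (α : ℝ) (u : X → ℝ) (x : ℤ → X) : Prop :=
  ∀ (m : ℤ) (k : ℕ), u (x (m + k)) =
    u (x m) + (∑ i ∈ Finset.range k, c (x (m + i)) (x (m + i + 1))) + k * α

/-- The projected Aubry set of a critical sub-solution `u`. -/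
def projAubry {X : Type*} (c : X → X → ℝ) (u : X → ℝ) : Set X :=
  {p : X | ∃ x : ℤ → X, IsCalibrated c (critValue c) u x ∧ x 0 = p}

/-- The set `Â_u` of pairs of consecutive terms of calibrated bi-infinite sequences. -/
def aubryPairs {X : Type*} (c : X → X → ℝ) (u : X → ℝ) : Set (X × X) :=
  {q : X × X | ∃ (x : ℤ → X) (n : ℤ),
    IsCalibrated c (critValue c) u x ∧ x n = q.1 ∧ x (n + 1) = q.2}

/-- The projected Aubry set `A = ∩_u A_u`, intersection over all critical sub-solutions. -/
def projAubrySet {X : Type*} (c : X → X → ℝ) : Set X :=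
  {p : X | ∀ u : X → ℝ, Dominated c (critValue c) u → p ∈ projAubry c u}

/-- The Aubry pair set `Â = ∩_u Â_u`, intersection over all critical sub-solutions. -/
def aubryPairsSet {X : Type*} (c : X → X → ℝ) : Set (X × X) :=
  {q : X × X | ∀ u : X → ℝ, Dominated c (critValue c) u → q ∈ aubryPairs c u}

/-- `c_n(x,y)`: infimum of total cost over chains of length `n` from `x` to `y`. -/
noncomputable def cChain {X : Type*} (c : X → X → ℝ) (n : ℕ) (x y : X) : ℝ :=
  sInf {r : ℝ | ∃ p : ℕ → X, p 0 = x ∧ p n = y ∧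
    r = ∑ i ∈ Finset.range n, c (p i) (p (i + 1))}

/-- `φ_n(x,y) = inf_{k ≥ n} (c_k(x,y) + k·α)`. -/
noncomputable def phiN {X : Type*} (c : X → X → ℝ) (α : ℝ) (n : ℕ) (x y : X) : ℝ :=
  sInf {r : ℝ | ∃ k : ℕ, n ≤ k ∧ r = cChain c k x y + k * α}

/-- The Peierls barrier, with values in the extended reals. -/
noncomputable def peierls {X : Type*} (c : X → X → ℝ) (α : ℝ) (x y : X) : EReal :=
  Filter.liminf (fun n : ℕ => ((cChain c n x y + n * α : ℝ) : EReal)) Filter.atTop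

/-- Negative Lax-Oleinik semigroup on extended-real-valued functions. -/
noncomputable def eTm {X : Type*} (c : X → X → ℝ) (u : X → EReal) (x : X) : EReal :=
  ⨅ y, (u y + (c y x : EReal))

/-- Positive Lax-Oleinik semigroup on extended-real-valued functions. -/
noncomputable def eTp {X : Type*} (c : X → X → ℝ) (u : X → EReal) (x : X) : EReal :=
  ⨆ y, (u y - (c x y : EReal))

/-!
The potential `Φ x y = inf_{n ≥ 1} (c_n(x,y) + n α[0])`, which is `phiN c (critValue c) 1`,
satisfies the triangle inequality and `Φ ≤ c + α[0]`; hence `Φ x ·` and `-Φ · x` are critical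
sub-solutions, and `u y - u x ≤ Φ x y` for every critical sub-solution `u`.

If `x ∈ A`, calibrating `Φ x ·` at `x` gives `Φ x x = 0`, and calibrating `-Φ · x` along a sequence
through `x` gives chains of every length `k` from `x` whose cost, plus the potential back to `x`,
is `Φ x x = 0`. Closing them up yields loops at `x` of unbounded length and critical cost close to
`0`, so `h(x,x) = 0`.

Conversely, if `h(x,x) = 0`, take loops at `x` of length `n_j → ∞` and critical cost `→ 0`, and
repeat each of them periodically. On a length space `Φ` grows at most linearly while `c` is
superlinear, so the `l`-th term of every such sequence lies in a ball around `x` depending only on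
`l`; by compactness a subsequence converges termwise to some `y` with `y 0 = x`. In the limit,
the cost of every window `y m, …, y (m + k)` plus `k α[0] + Φ (y (m + k)) (y m)` is `≤ 0`, which
forces every critical sub-solution to be calibrated along `y`.
-/

section Chains

variable {X : Type*} {c : X → X → ℝ}

def chainCost (c : X → X → ℝ) (p : ℕ → X) (n : ℕ) : ℝ :=
  ∑ i ∈ Finset.range n, c (p i) (p (i + 1))

theorem chainCost_add (p : ℕ → X) (n m : ℕ) :
    chainCost c p (n + m) = chainCost c p n + chainCost c (fun i => p (n + i)) m := by
  simp only [chainCost, Finset.sum_range_add, Nat.add_assoc]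

theorem chainCost_one (p : ℕ → X) : chainCost c p 1 = c (p 0) (p 1) := by
  simp [chainCost]

theorem chainCost_shift_eq_sum (z : ℤ → X) (m : ℤ) (k : ℕ) :
    chainCost c (fun i : ℕ => z (m + i)) k =
      ∑ i ∈ Finset.range k, c (z (m + i)) (z (m + i + 1)) := by
  simp only [chainCost, Nat.cast_add, Nat.cast_one, add_assoc]

theorem chainCost_shift_add (z : ℤ → X) {m m' : ℤ} {a : ℕ} (h : m + a = m') (b : ℕ) :
    chainCost c (fun i : ℕ => z (m + i)) (a + b) =
      chainCost c (fun i : ℕ => z (m + i)) a + chainCost c (fun i : ℕ => z (m' + i)) b := by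
  subst h
  simp only [chainCost_add, Nat.cast_add, add_assoc]

theorem IsCalibrated.eq_chainCost {α : ℝ} {u : X → ℝ} {z : ℤ → X} (h : IsCalibrated c α u z)
    (m : ℤ) (k : ℕ) :
    u (z (m + k)) = u (z m) + chainCost c (fun i : ℕ => z (m + i)) k + k * α := by
  rw [chainCost_shift_eq_sum]
  exact h m k

theorem Dominated.sub_le_chainCost {α : ℝ} {u : X → ℝ} (hu : Dominated c α u) (p : ℕ → X)
    (n : ℕ) : u (p n) - u (p 0) ≤ chainCost c p n + n * α := by
  induction n with
  | zero => simp [chainCost]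
  | succ n ih =>
    have := hu (p n) (p (n + 1))
    simp only [chainCost, Finset.sum_range_succ, Nat.cast_succ] at ih ⊢
    linarith

theorem cChain_le_chainCost {C : ℝ} (hC : ∀ x y, C ≤ c x y) {p : ℕ → X} {n : ℕ} {x y : X}
    (h0 : p 0 = x) (hn : p n = y) : cChain c n x y ≤ chainCost c p n := by
  refine csInf_le ⟨n * C, ?_⟩ ⟨p, h0, hn, rfl⟩
  rintro _ ⟨q, -, -, rfl⟩
  simpa using Finset.card_nsmul_le_sum (Finset.range n) _ C fun i _ => hC _ _

theorem exists_chainCost_lt (x y : X) {n : ℕ} (hn : n ≠ 0) {ε : ℝ} (hε : 0 < ε) :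
    ∃ p : ℕ → X, p 0 = x ∧ p n = y ∧ chainCost c p n < cChain c n x y + ε := by
  have hne : {r : ℝ | ∃ p : ℕ → X, p 0 = x ∧ p n = y ∧ r = chainCost c p n}.Nonempty :=
    ⟨_, fun i => if i = 0 then x else y, if_pos rfl, if_neg hn, rfl⟩
  obtain ⟨_, ⟨p, h0, hn, rfl⟩, hlt⟩ := Real.lt_sInf_add_pos hne hε
  exact ⟨p, h0, hn, hlt⟩

theorem Dominated.sub_le_cChain {α : ℝ} {u : X → ℝ} (hu : Dominated c α u) (x y : X) {n : ℕ}
    (hn : n ≠ 0) : u y - u x ≤ cChain c n x y + n * α := by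
  refine le_of_forall_pos_lt_add fun ε hε => ?_
  obtain ⟨p, rfl, rfl, hp⟩ := exists_chainCost_lt (c := c) x y hn hε
  linarith [hu.sub_le_chainCost p n]

theorem cChain_add_le {C : ℝ} (hC : ∀ x y, C ≤ c x y) (x y z : X) {n m : ℕ} (hn : n ≠ 0)
    (hm : m ≠ 0) : cChain c (n + m) x z ≤ cChain c n x y + cChain c m y z := by
  refine le_of_forall_pos_lt_add fun ε hε => ?_
  obtain ⟨p, hp0, hpn, hp⟩ := exists_chainCost_lt (c := c) x y hn (half_pos hε)
  obtain ⟨q, hq0, hqm, hq⟩ := exists_chainCost_lt (c := c) y z hm (half_pos hε)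
  set r : ℕ → X := fun i => if i ≤ n then p i else q (i - n)
  have hrp : chainCost c r n = chainCost c p n :=
    Finset.sum_congr rfl fun i hi => by
      have := Finset.mem_range.1 hi
      simp only [r, if_pos this.le, if_pos (Nat.succ_le_of_lt this)]
  have hrq : (fun i => r (n + i)) = q := by
    funext i
    rcases i with _ | i
    · simp [r, hpn, hq0]
    · simp [r]
  calc cChain c (n + m) x z ≤ chainCost c r (n + m) :=
        cChain_le_chainCost hC (by simp [r, hp0]) (by simp [r, hm, hqm])
    _ = chainCost c p n + chainCost c q m := by rw [chainCost_add, hrp, hrq]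
    _ < cChain c n x y + cChain c m y z + ε := by linarith

theorem cChain_one_le {C : ℝ} (hC : ∀ x y, C ≤ c x y) (x y : X) : cChain c 1 x y ≤ c x y :=
  (cChain_le_chainCost hC (p := fun i => if i = 0 then x else y) rfl rfl).trans_eq
    (by simp [chainCost])

theorem cChain_self_add_critValue_nonneg {C : ℝ} (hC : ∀ x y, C ≤ c x y) (x : X) {n : ℕ}
    (hn : n ≠ 0) : 0 ≤ cChain c n x x + n * critValue c := by
  have hn' : (0 : ℝ) < n := by positivity
  have h : -cChain c n x x / n ≤ critValue c := by
    refine le_csInf ⟨-C, fun _ => 0, fun a b => by linarith [hC a b]⟩ ?_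
    rintro α ⟨u, hu⟩
    rw [div_le_iff₀ hn']
    linarith [hu.sub_le_cChain x x hn]
  rw [div_le_iff₀ hn'] at h
  linarith

end Chains

section Potential

variable {X : Type*} {c : X → X → ℝ} {C : ℝ}

theorem phiN_one_le (hC : ∀ x y, C ≤ c x y) {x y : X} {n : ℕ} (hn : n ≠ 0) :
    phiN c (critValue c) 1 x y ≤ cChain c n x y + n * critValue c := by
  refine csInf_le ⟨-(c y x + critValue c), ?_⟩ ⟨n, Nat.one_le_iff_ne_zero.2 hn, rfl⟩
  rintro _ ⟨k, hk, rfl⟩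
  have h1 := cChain_add_le hC x y x (Nat.one_le_iff_ne_zero.1 hk) one_ne_zero
  have h2 := cChain_self_add_critValue_nonneg hC x (n := k + 1) (by omega)
  push_cast at h2
  linarith [cChain_one_le hC y x]

theorem phiN_one_le_add_critValue (hC : ∀ x y, C ≤ c x y) (x y : X) :
    phiN c (critValue c) 1 x y ≤ c x y + critValue c := by
  have := phiN_one_le hC (x := x) (y := y) one_ne_zero
  push_cast at this
  linarith [cChain_one_le hC x y]

theorem exists_cChain_add_lt_phiN_one (x y : X) {ε : ℝ} (hε : 0 < ε) :
    ∃ n ≠ 0, cChain c n x y + n * critValue c < phiN c (critValue c) 1 x y + ε := by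
  have hne : {r : ℝ | ∃ k : ℕ, 1 ≤ k ∧ r = cChain c k x y + k * critValue c}.Nonempty :=
    ⟨_, 1, le_rfl, rfl⟩
  obtain ⟨_, ⟨n, hn, rfl⟩, hlt⟩ := Real.lt_sInf_add_pos hne hε
  exact ⟨n, Nat.one_le_iff_ne_zero.1 hn, hlt⟩

theorem Dominated.sub_le_phiN_one {u : X → ℝ} (hu : Dominated c (critValue c) u) (x y : X) :
    u y - u x ≤ phiN c (critValue c) 1 x y := by
  refine le_of_forall_pos_lt_add fun ε hε => ?_
  obtain ⟨n, hn, hlt⟩ := exists_cChain_add_lt_phiN_one (c := c) x y hε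
  linarith [hu.sub_le_cChain x y hn]

theorem phiN_one_triangle (hC : ∀ x y, C ≤ c x y) (x y z : X) :
    phiN c (critValue c) 1 x z ≤ phiN c (critValue c) 1 x y + phiN c (critValue c) 1 y z := by
  refine le_of_forall_pos_lt_add fun ε hε => ?_
  obtain ⟨n, hn, hxy⟩ := exists_cChain_add_lt_phiN_one (c := c) x y (half_pos hε)
  obtain ⟨m, hm, hyz⟩ := exists_cChain_add_lt_phiN_one (c := c) y z (half_pos hε)
  have h := phiN_one_le hC (x := x) (y := z) (n := n + m) (by omega)
  push_cast at h
  linarith [cChain_add_le hC x y z hn hm]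

theorem phiN_one_self_nonneg (hC : ∀ x y, C ≤ c x y) (x : X) :
    0 ≤ phiN c (critValue c) 1 x x := by
  refine le_csInf ⟨_, 1, le_rfl, rfl⟩ ?_
  rintro _ ⟨n, hn, rfl⟩
  exact cChain_self_add_critValue_nonneg hC x (Nat.one_le_iff_ne_zero.1 hn)

theorem neg_phiN_one_le (hC : ∀ x y, C ≤ c x y) (x y : X) :
    -phiN c (critValue c) 1 y x ≤ phiN c (critValue c) 1 x y := by
  linarith [phiN_one_triangle hC y x y, phiN_one_self_nonneg hC y]

theorem dominated_phiN_one (hC : ∀ x y, C ≤ c x y) (x : X) :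
    Dominated c (critValue c) (phiN c (critValue c) 1 x) := fun a b => by
  linarith [phiN_one_triangle hC x a b, phiN_one_le_add_critValue hC a b]

theorem dominated_neg_phiN_one (hC : ∀ x y, C ≤ c x y) (y : X) :
    Dominated c (critValue c) (fun z => -phiN c (critValue c) 1 z y) := fun a b => by
  linarith [phiN_one_triangle hC a b y, phiN_one_le_add_critValue hC a b]

theorem phiN_one_self_eq_zero_of_mem (hC : ∀ x y, C ≤ c x y) {x : X}
    (hx : x ∈ projAubrySet c) : phiN c (critValue c) 1 x x = 0 := by
  obtain ⟨z, hz, rfl⟩ := hx _ (dominated_phiN_one hC x)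
  have h := hz.eq_chainCost 0 1
  simp only [Nat.cast_one, Nat.cast_zero, zero_add, chainCost_one, one_mul] at h
  linarith [phiN_one_le_add_critValue hC (z 0) (z 1), phiN_one_self_nonneg hC (z 0)]

theorem exists_cChain_self_lt_of_mem (hC : ∀ x y, C ≤ c x y) {x : X} (hx : x ∈ projAubrySet c)
    {ε : ℝ} (hε : 0 < ε) (N : ℕ) : ∃ n ≥ N, cChain c n x x + n * critValue c < ε := by
  have hxx := phiN_one_self_eq_zero_of_mem hC hx
  obtain ⟨z, hz, rfl⟩ := hx _ (dominated_neg_phiN_one hC x)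
  have hcal := hz.eq_chainCost 0 (N + 1)
  rw [zero_add] at hcal
  obtain ⟨m, hm, hlt⟩ := exists_cChain_add_lt_phiN_one (c := c) (z (N + 1 : ℕ)) (z 0) hε
  refine ⟨N + 1 + m, by omega, ?_⟩
  have h1 := cChain_add_le hC (z 0) (z (N + 1 : ℕ)) (z 0) (n := N + 1) (by omega) hm
  have h2 := cChain_le_chainCost hC (p := fun i : ℕ => z (0 + i)) (x := z 0)
    (y := z (N + 1 : ℕ)) (n := N + 1) (by simp) (by simp)
  push_cast at hcal h1 h2 hlt ⊢
  linarith

theorem peierls_self_nonneg (hC : ∀ x y, C ≤ c x y) (x : X) :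
    0 ≤ peierls c (critValue c) x x := by
  refine Filter.le_liminf_of_le (by isBoundedDefault) ?_
  filter_upwards [Filter.eventually_ge_atTop 1] with n hn
  exact EReal.coe_nonneg.2 (cChain_self_add_critValue_nonneg hC x (by omega))

theorem peierls_self_eq_zero_of_mem (hC : ∀ x y, C ≤ c x y) {x : X}
    (hx : x ∈ projAubrySet c) : peierls c (critValue c) x x = 0 := by
  refine le_antisymm (le_of_forall_gt_imp_ge_of_dense fun a ha => ?_) (peierls_self_nonneg hC x)
  obtain ⟨ε, hε, hεa⟩ := EReal.lt_iff_exists_real_btwn.1 ha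
  refine (Filter.liminf_le_of_frequently_le' (Filter.frequently_atTop.2 fun N => ?_)).trans hεa.le
  obtain ⟨n, hn, hlt⟩ := exists_cChain_self_lt_of_mem hC hx (EReal.coe_pos.1 hε) N
  exact ⟨n, hn, EReal.coe_le_coe_iff.2 hlt.le⟩

theorem mem_projAubrySet_of_forall_chainCost_add_phiN_one_nonpos {x : X} {y : ℤ → X}
    (hy0 : y 0 = x) (hy : ∀ (m : ℤ) (k : ℕ), chainCost c (fun i : ℕ => y (m + i)) k
      + k * critValue c + phiN c (critValue c) 1 (y (m + k)) (y m) ≤ 0) :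
    x ∈ projAubrySet c := by
  intro u hu
  refine ⟨y, fun m k => ?_, hy0⟩
  rw [← chainCost_shift_eq_sum]
  have h1 := hu.sub_le_chainCost (fun i : ℕ => y (m + i)) k
  have h2 := hu.sub_le_phiN_one (y (m + k)) (y m)
  simp only [Nat.cast_zero, add_zero] at h1
  linarith [hy m k]

theorem exists_loop_of_peierls_self_eq_zero {α : ℝ} {x : X} (hx : peierls c α x x = 0) {ε : ℝ}
    (hε : 0 < ε) (N : ℕ) :
    ∃ n ≥ N, n ≠ 0 ∧ ∃ p : ℕ → X, p 0 = x ∧ p n = x ∧ chainCost c p n + n * α < ε := by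
  have hfreq : ∃ᶠ n : ℕ in atTop, ((cChain c n x x + n * α : ℝ) : EReal) < (ε / 2 : ℝ) :=
    Filter.frequently_lt_of_liminf_lt (by isBoundedDefault)
      (by rw [← peierls, hx]; exact_mod_cast half_pos hε)
  obtain ⟨n, hn, hlt⟩ := Filter.frequently_atTop.1 hfreq (N + 1)
  obtain ⟨p, hp0, hpn, hp⟩ := exists_chainCost_lt (c := c) x x (n := n) (by omega) (half_pos hε)
  exact ⟨n, by omega, by omega, p, hp0, hpn, by linarith [EReal.coe_lt_coe_iff.1 hlt]⟩

end Potential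

theorem Function.Periodic.sum_range_add {M : Type*} [AddCommMonoid M] {g : ℤ → M} {n : ℕ}
    (hg : Function.Periodic g n) (m : ℤ) :
    ∑ i ∈ Finset.range n, g (m + i) = ∑ i ∈ Finset.range n, g i := by
  have step : ∀ m : ℤ, ∑ i ∈ Finset.range n, g (m + 1 + i) = ∑ i ∈ Finset.range n, g (m + i) := by
    intro m
    rcases n with _ | n
    · rfl
    rw [Finset.sum_range_succ, Finset.sum_range_succ']
    congr 1
    · refine Finset.sum_congr rfl fun i _ => ?_
      push_cast
      ring_nf
    · have := hg m
      push_cast at this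
      rw [add_assoc, add_comm 1, this, Nat.cast_zero, add_zero]
  induction m using Int.induction_on with
  | zero => simp
  | succ i ih => rw [step, ih]
  | pred i ih => rw [← ih, ← step]; ring_nf

theorem Int.emod_le_abs_or_sub_emod_le_abs {n : ℤ} (hn : 0 < n) (l : ℤ) :
    l % n ≤ |l| ∨ n - l % n ≤ |l| := by
  have hdiv := Int.emod_add_mul_ediv l n
  rcases le_or_gt 0 l with hl | hl
  · have := Int.ediv_nonneg hl hn.le
    left
    rw [abs_of_nonneg hl]
    nlinarith
  · have := Int.ediv_neg_of_neg_of_pos hl hn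
    right
    rw [abs_of_neg hl]
    nlinarith

section Periodize

variable {X : Type*} {c : X → X → ℝ} {C₀ : ℝ}

def periodize (p : ℕ → X) (n : ℕ) (l : ℤ) : X :=
  p (l % n).toNat

theorem periodic_periodize (p : ℕ → X) (n : ℕ) : Function.Periodic (periodize p n) n := by
  intro l
  simp [periodize]

theorem periodize_natCast {p : ℕ → X} {n i : ℕ} (hi : i < n) : periodize p n i = p i := by
  simp [periodize, Int.emod_eq_of_lt (Int.natCast_nonneg i) (Int.ofNat_lt.2 hi)]

theorem periodize_zero (p : ℕ → X) (n : ℕ) : periodize p n 0 = p 0 := by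
  simp [periodize]

theorem chainCost_periodize {p : ℕ → X} {n : ℕ} (hp : p n = p 0) (m : ℤ) :
    chainCost c (fun i : ℕ => periodize p n (m + i)) n = chainCost c p n := by
  have hper := periodic_periodize p n
  have hg : Function.Periodic (fun l => c (periodize p n l) (periodize p n (l + 1))) n :=
    fun l => by simp only [hper l, add_right_comm l (n : ℤ) 1, hper (l + 1)]
  have hp' : ∀ i ≤ n, periodize p n i = p i := fun i hi => by
    rcases hi.lt_or_eq with hi | rfl
    · exact periodize_natCast hi
    · simpa [hp, periodize_zero] using hper 0
  rw [chainCost_shift_eq_sum, hg.sum_range_add]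
  refine Finset.sum_congr rfl fun i hi => ?_
  have hi := Finset.mem_range.1 hi
  rw [hp' i hi.le, ← Nat.cast_succ, hp' (i + 1) hi]

/-- Cutting the window `m, …, m + k` out of a periodic loop, the rest of the loop is a chain from
the window's end back to its start; its first and last points are then replaced by `a` and `b`,
which costs the two error terms on the right. -/
theorem chainCost_add_phiN_one_le_of_periodic (hC₀ : ∀ x y, C₀ ≤ c x y) {Y : ℤ → X} {n k : ℕ}
    (hY : Function.Periodic Y n) (hn : k + 3 ≤ n) {m : ℤ} {ε : ℝ}
    (hcost : chainCost c (fun i : ℕ => Y (m - 1 + i)) n + n * critValue c ≤ ε) (a b : X) :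
    chainCost c (fun i : ℕ => Y (m + i)) k + k * critValue c + phiN c (critValue c) 1 a b ≤
      ε + (c a (Y (m + k + 1)) - c (Y (m + k)) (Y (m + k + 1)))
        + (c (Y (m - 1)) b - c (Y (m - 1)) (Y m)) := by
  obtain ⟨r, rfl⟩ : ∃ r, n = 1 + k + 1 + (r + 1) := ⟨n - k - 3, by omega⟩
  rw [chainCost_shift_add Y (m' := m + k + 1) (by push_cast; ring),
    chainCost_shift_add Y (m' := m + k) (by push_cast; ring),
    chainCost_shift_add Y (m' := m) (by push_cast; ring)] at hcost
  simp only [chainCost_one, Nat.cast_zero, Nat.cast_one, add_zero, sub_add_cancel] at hcost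
  have hend : Y (m + k + 1 + (r + 1 : ℕ)) = Y (m - 1) := by
    rw [← hY (m - 1)]
    congr 1
    push_cast
    ring
  have hmid := phiN_one_le hC₀ (x := Y (m + k + 1)) (y := Y (m - 1)) r.succ_ne_zero
  have hmid' := cChain_le_chainCost hC₀ (p := fun i : ℕ => Y (m + k + 1 + i))
    (x := Y (m + k + 1)) (by simp) hend
  have htri := phiN_one_triangle hC₀ a (Y (m + k + 1)) b
  have htri' := phiN_one_triangle hC₀ (Y (m + k + 1)) (Y (m - 1)) b
  have ha := phiN_one_le_add_critValue hC₀ a (Y (m + k + 1))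
  have hb := phiN_one_le_add_critValue hC₀ (Y (m - 1)) b
  push_cast at hcost hmid
  linarith

end Periodize

section Metric

variable {X : Type*} [MetricSpace X]

theorem UniformlySuperlinear.exists_le {c : X → X → ℝ} (hsl : UniformlySuperlinear c) :
    ∃ C, ∀ x y, C ≤ c x y := by
  obtain ⟨C, hC⟩ := hsl 0 le_rfl
  exact ⟨-C, fun x y => by linarith [hC x y]⟩

/-- Greedy blocking: `a` is the start of the current block of steps; the block is closed as soon
as the next step would make its length exceed `K`, so every closed block has length in `(K, 2K]`
and costs at most `M`. -/
theorem mul_le_of_subadditive_of_chain {F : X → X → ℝ} {K M : ℝ} (hK : 0 < K) (hM : 0 ≤ M)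
    (hloc : ∀ a b, dist a b ≤ 2 * K → F a b ≤ M) (hsub : ∀ a b d, F a d ≤ F a b + F b d)
    (n : ℕ) (p : ℕ → X) (hp : ∀ i < n, dist (p i) (p (i + 1)) ≤ K) (a : X)
    (ha : dist a (p 0) ≤ K) :
    K * F a (p n) ≤ M * (dist a (p 0) + ∑ i ∈ Finset.range n, dist (p i) (p (i + 1)) + K) := by
  induction n generalizing p a with
  | zero =>
    have := hloc a (p 0) (by linarith)
    simp only [Finset.range_zero, Finset.sum_empty, add_zero]
    nlinarith [dist_nonneg (x := a) (y := p 0)]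
  | succ n ih =>
    have htail := ih (fun i => p (i + 1)) (fun i hi => hp (i + 1) (by omega))
    have h01 := hp 0 n.succ_pos
    have h02 := dist_triangle a (p 0) (p 1)
    rw [Finset.sum_range_succ']
    by_cases hnear : dist a (p 0) + dist (p 0) (p 1) ≤ K
    · have := htail a (by linarith)
      nlinarith
    · have h1 := hloc a (p 1) (by linarith)
      have h2 := htail (p 1) (by simp [hK.le])
      have h3 := hsub a (p 1) (p (n + 1))
      simp only [dist_self, zero_add] at h2
      nlinarith

theorem IsBLengthSpaceAtScale.mul_le_of_subadditive {B K : ℝ}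
    (hlen : IsBLengthSpaceAtScale X B K) (hK : 0 < K) {F : X → X → ℝ} {M : ℝ} (hM : 0 ≤ M)
    (hloc : ∀ a b, dist a b ≤ 2 * K → F a b ≤ M) (hsub : ∀ a b d, F a d ≤ F a b + F b d)
    (a b : X) : K * F a b ≤ M * (B * dist a b + K) := by
  obtain ⟨n, p, rfl, rfl, hstep, hsum⟩ := hlen a b
  have := mul_le_of_subadditive_of_chain hK hM hloc hsub n p hstep (p 0) (by simp [hK.le])
  rw [dist_self, zero_add] at this
  nlinarith

theorem exists_phiN_one_le_mul_dist_add {B K : ℝ} (hlen : IsBLengthSpaceAtScale X B K)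
    (hK : 0 < K) {c : X → X → ℝ} {C : ℝ} (hC : ∀ x y, C ≤ c x y) (hub : UniformlyBounded c) :
    ∃ κ M : ℝ, 0 ≤ κ ∧ ∀ a b, phiN c (critValue c) 1 a b ≤ κ * dist a b + M := by
  obtain ⟨A, hA⟩ := hub (2 * K)
  set M := max (A + critValue c) 0
  refine ⟨max (M * B / K) 0, M, le_max_right _ _, fun a b => ?_⟩
  have hloc : ∀ a b, dist a b ≤ 2 * K → phiN c (critValue c) 1 a b ≤ M := fun a b hab => by
    linarith [phiN_one_le_add_critValue hC a b, hA a b hab, le_max_left (A + critValue c) 0]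
  have h := hlen.mul_le_of_subadditive hK (le_max_right _ _) hloc (phiN_one_triangle hC) a b
  have h' : phiN c (critValue c) 1 a b ≤ M * B / K * dist a b + M := by
    rw [show M * B / K * dist a b + M = M * (B * dist a b + K) / K by field_simp,
      le_div_iff₀ hK]
    linarith
  nlinarith [le_max_left (M * B / K) 0, dist_nonneg (x := a) (y := b)]

end Metric

section Loops

variable {X : Type*} [MetricSpace X] {c : X → X → ℝ} {C₀ : ℝ}

theorem mul_dist_sub_le_chainCost {k C : ℝ} (hk : 0 ≤ k) (hc : ∀ a b, k * dist a b - C ≤ c a b)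
    (p : ℕ → X) (n : ℕ) : k * dist (p 0) (p n) - n * C ≤ chainCost c p n := by
  calc k * dist (p 0) (p n) - n * C
      ≤ ∑ i ∈ Finset.range n, (k * dist (p i) (p (i + 1)) - C) := by
        rw [Finset.sum_sub_distrib, ← Finset.mul_sum]
        simp only [Finset.sum_const, Finset.card_range, nsmul_eq_mul]
        gcongr
        exact dist_le_range_sum_dist p n
    _ ≤ chainCost c p n := Finset.sum_le_sum fun i _ => hc _ _

/-- Along a loop of small critical cost, a point reached after `i` steps cannot be far from the
base point: the first `i` steps pay superlinearly for the distance travelled, while the way back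
can save at most the linear growth of the potential. -/
theorem dist_le_of_chainCost_loop {κ M C ε : ℝ} (hC₀ : ∀ x y, C₀ ≤ c x y) (hκ : 0 ≤ κ)
    (hφ : ∀ a b, phiN c (critValue c) 1 a b ≤ κ * dist a b + M)
    (hc : ∀ a b, (κ + 1) * dist a b - C ≤ c a b) {q : ℕ → X} {n i : ℕ} (hq : q n = q 0)
    (hi : i < n) (hcost : chainCost c q n + n * critValue c ≤ ε) :
    dist (q 0) (q i) ≤ ε + M + i * (C - critValue c) := by
  obtain ⟨j, rfl⟩ : ∃ j, n = i + j := ⟨n - i, by omega⟩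
  rw [chainCost_add] at hcost
  have h1 := mul_dist_sub_le_chainCost (by linarith) hc q i
  have h2 := phiN_one_le hC₀ (x := q i) (y := q 0) (n := j) (by omega)
  have h3 := cChain_le_chainCost hC₀ (p := fun k => q (i + k)) (x := q i) (n := j) rfl hq
  have h4 := neg_phiN_one_le hC₀ (q i) (q 0)
  have h5 := hφ (q 0) (q i)
  push_cast at hcost
  nlinarith

theorem dist_periodize_le {κ M C ε : ℝ} (hC₀ : ∀ x y, C₀ ≤ c x y) (hκ : 0 ≤ κ)
    (hφ : ∀ a b, phiN c (critValue c) 1 a b ≤ κ * dist a b + M)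
    (hc : ∀ a b, (κ + 1) * dist a b - C ≤ c a b) {x : X} {p : ℕ → X} {n : ℕ} (hn : n ≠ 0)
    (hp0 : p 0 = x) (hpn : p n = x) (hcost : chainCost c p n + n * critValue c ≤ ε) (l : ℤ) :
    dist x (periodize p n l) ≤ ε + M + |l| * max (C - critValue c) 0 := by
  set Y := periodize p n
  set i := (l % n).toNat
  have hn' : (0 : ℤ) < n := by positivity
  have hi_eq : (i : ℤ) = l % n := Int.toNat_of_nonneg (Int.emod_nonneg l hn'.ne')
  have hi : i < n := by have := Int.emod_lt_of_pos l hn'; omega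
  have hYl : Y l = Y i := (periodize_natCast hi).symm
  have hloop : ∀ m : ℤ, chainCost c (fun k : ℕ => Y (m + k)) n + n * critValue c ≤ ε :=
    fun m => by rwa [chainCost_periodize (hpn.trans hp0.symm)]
  have hYn : ∀ m : ℤ, Y (m + n) = Y m := periodic_periodize p n
  have hY0 : Y 0 = x := (periodize_zero p n).trans hp0
  have hD : ∀ j : ℕ, (j : ℤ) ≤ |l| → j * (C - critValue c) ≤ |l| * max (C - critValue c) 0 :=
    fun j hj => by
      have : (j : ℝ) ≤ |l| := by exact_mod_cast hj
      nlinarith [le_max_left (C - critValue c) 0, le_max_right (C - critValue c) 0]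
  by_cases hfwd : (i : ℤ) ≤ |l|
  · have h := dist_le_of_chainCost_loop hC₀ hκ hφ hc (q := fun k : ℕ => Y (0 + k)) (i := i)
      (by simpa using hYn 0) hi (hloop 0)
    simp only [Nat.cast_zero, zero_add, hY0] at h
    rw [hYl]
    linarith [hD i hfwd]
  · have hback : ((n - i : ℕ) : ℤ) ≤ |l| := by
      rw [Nat.cast_sub hi.le, hi_eq]
      exact (Int.emod_le_abs_or_sub_emod_le_abs hn' l).resolve_left (hi_eq ▸ hfwd)
    have h := dist_le_of_chainCost_loop hC₀ hκ hφ hc (q := fun k : ℕ => Y (i + k)) (i := n - i)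
      (by simpa using hYn i) (by have := abs_nonneg l; omega) (hloop i)
    have hYn0 : Y n = x := by simpa [hY0] using hYn 0
    have hfar := hD (n - i) hback
    simp only [Nat.cast_zero, add_zero, Nat.cast_sub hi.le, add_sub_cancel, hYn0] at h hfar
    rw [hYl, dist_comm]
    linarith

theorem chainCost_add_phiN_one_nonpos_of_tendsto (hC₀ : ∀ x y, C₀ ≤ c x y)
    (hcont : Continuous fun q : X × X => c q.1 q.2) {Y : ℕ → ℤ → X} {n : ℕ → ℕ} {ε : ℕ → ℝ}
    {y : ℤ → X} (hY : ∀ i, Tendsto (fun j => Y j i) atTop (𝓝 (y i)))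
    (hper : ∀ j, Function.Periodic (Y j) (n j)) (hn : Tendsto n atTop atTop)
    (hcost : ∀ j m, chainCost c (fun i : ℕ => Y j (m + i)) (n j) + n j * critValue c ≤ ε j)
    (hε : Tendsto ε atTop (𝓝 0)) (m : ℤ) (k : ℕ) :
    chainCost c (fun i : ℕ => y (m + i)) k + k * critValue c
      + phiN c (critValue c) 1 (y (m + k)) (y m) ≤ 0 := by
  have hc : ∀ {a b : ℕ → X} {a₀ b₀ : X}, Tendsto a atTop (𝓝 a₀) → Tendsto b atTop (𝓝 b₀) →
      Tendsto (fun j => c (a j) (b j)) atTop (𝓝 (c a₀ b₀)) :=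
    fun ha hb => (hcont.tendsto _).comp (ha.prodMk_nhds hb)
  have hS : Tendsto (fun j => chainCost c (fun i : ℕ => Y j (m + i)) k) atTop
      (𝓝 (chainCost c (fun i : ℕ => y (m + i)) k)) :=
    tendsto_finsetSum _ fun i _ => hc (hY _) (hY _)
  set S := chainCost c (fun i : ℕ => y (m + i)) k
  have herr : Tendsto (fun j => ε j
      + (c (y (m + k)) (Y j (m + k + 1)) - c (Y j (m + k)) (Y j (m + k + 1)))
      + (c (Y j (m - 1)) (y m) - c (Y j (m - 1)) (Y j m))
      + (S - chainCost c (fun i : ℕ => Y j (m + i)) k)) atTop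
      (𝓝 (0 + (c (y (m + k)) (y (m + k + 1)) - c (y (m + k)) (y (m + k + 1)))
        + (c (y (m - 1)) (y m) - c (y (m - 1)) (y m)) + (S - S))) :=
    ((hε.add ((hc tendsto_const_nhds (hY _)).sub (hc (hY _) (hY _)))).add
      ((hc (hY _) tendsto_const_nhds).sub (hc (hY _) (hY _)))).add (hS.const_sub S)
  simp only [sub_self, add_zero] at herr
  refine ge_of_tendsto herr ?_
  filter_upwards [hn.eventually_ge_atTop (k + 3)] with j hj
  have := chainCost_add_phiN_one_le_of_periodic hC₀ (hper j) hj (hcost j (m - 1))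
    (y (m + k)) (y m)
  linarith

end Loops

theorem mem_projAubrySet_of_peierls_self_eq_zero {X : Type*} [MetricSpace X] [ProperSpace X]
    {B K : ℝ} (hK : 0 < K) (hlen : IsBLengthSpaceAtScale X B K) {c : X → X → ℝ}
    (hcont : Continuous fun q : X × X => c q.1 q.2) (hsl : UniformlySuperlinear c)
    (hub : UniformlyBounded c) {x : X} (hx : peierls c (critValue c) x x = 0) :
    x ∈ projAubrySet c := by
  obtain ⟨C₀, hC₀⟩ := hsl.exists_le
  obtain ⟨κ, M, hκ, hφ⟩ := exists_phiN_one_le_mul_dist_add hlen hK hC₀ hub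
  obtain ⟨C, hc⟩ := hsl (κ + 1) (by linarith)
  choose n hn hn0 p hp0 hpn hcost using fun j : ℕ =>
    exists_loop_of_peierls_self_eq_zero hx (ε := 1 / (j + 1)) (by positivity) (j + 3)
  set Y := fun j => periodize (p j) (n j)
  have hYcost : ∀ j (m : ℤ),
      chainCost c (fun i : ℕ => Y j (m + i)) (n j) + n j * critValue c ≤ 1 / (j + 1) :=
    fun j m => by rw [chainCost_periodize ((hpn j).trans (hp0 j).symm)]; exact (hcost j).le
  have hYball : ∀ j, Y j ∈ Set.univ.pi fun l : ℤ =>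
      closedBall x (1 + M + |l| * max (C - critValue c) 0) := fun j l _ => by
    rw [mem_closedBall, dist_comm]
    refine (dist_periodize_le hC₀ hκ hφ hc (hn0 j) (hp0 j) (hpn j) (hcost j).le l).trans ?_
    gcongr
    exact div_le_one_of_le₀ (by linarith) (by positivity)
  obtain ⟨y, -, φ, hφmono, hlim⟩ :=
    (isCompact_univ_pi fun l => isCompact_closedBall x _).tendsto_subseq hYball
  have hY := tendsto_pi_nhds.1 hlim
  refine mem_projAubrySet_of_forall_chainCost_add_phiN_one_nonpos
    (tendsto_nhds_unique (hY 0) ?_) fun m k => ?_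
  · simp [Y, periodize_zero, hp0]
  · refine chainCost_add_phiN_one_nonpos_of_tendsto hC₀ hcont hY
      (fun j => periodic_periodize _ _) ?_ (fun j => hYcost (φ j)) ?_ m k
    · exact tendsto_atTop_mono
        (fun j => (hφmono.id_le j).trans ((Nat.le_add_right _ 3).trans (hn (φ j)))) tendsto_id
    · exact tendsto_one_div_add_atTop_nhds_zero_nat.comp hφmono.tendsto_atTop

theorem aubry_eq_zero_set_of_peierls_general {X : Type*} [MetricSpace X] [ProperSpace X]
    {B K : ℝ} (hK : 0 < K) (hlen : IsBLengthSpaceAtScale X B K)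
    {c : X → X → ℝ} (hcont : Continuous fun q : X × X => c q.1 q.2)
    (hsl : UniformlySuperlinear c) (hub : UniformlyBounded c) :
    projAubrySet c = {x : X | peierls c (critValue c) x x = (0 : EReal)} := by
  obtain ⟨C, hC⟩ := hsl.exists_le
  ext x
  exact ⟨peierls_self_eq_zero_of_mem hC,
    mem_projAubrySet_of_peierls_self_eq_zero hK hlen hcont hsl hub⟩

theorem aubry_eq_zero_set_of_peierls {X : Type*} [MetricSpace X] [Nonempty X] [ProperSpace X]
    {B K : ℝ} (hB : 1 ≤ B) (hK : 0 < K) (hlen : IsBLengthSpaceAtScale X B K)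
    {c : X → X → ℝ} (hcont : Continuous fun q : X × X => c q.1 q.2)
    (hsl : UniformlySuperlinear c) (hub : UniformlyBounded c) :
    projAubrySet c = {x : X | peierls c (critValue c) x x = (0 : EReal)} :=
  aubry_eq_zero_set_of_peierls_general hK hlen hcont hsl hub
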